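/- For 0 < ε ≤ 1, the sub-extremal bound h(ε) = -1 + (2/ε)(1 + √(1-ε)) satisfies h(ε) > 4/9, and combined with (4/9)ε > 4/9 for ε > 1, every stable isoperimetric sphere in Reissner-Nordström (m > 0, Q ≠ 0) satisfies A > (16/9)πQ², with equality approached only in the limit ε → 1⁺ at r = r_c. -/

import Mathlib

/-! Both kinds of stable sphere have radius `r > 2|Q|/3`: in the sub-extremal case
`r ≥ r₀ ≥ m ≥ |Q|`, and in the super-extremal case `r > r_c = (2|Q|/3) · (|Q|/m)` with `|Q| > m`.
Squaring gives `A = 4πr² > (16/9)πQ²`. The bound `h(ε) > 4/9` holds with room to spare: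
`h(ε) ≥ 2/ε - 1 ≥ 1`. -/

open Real

lemma one_le_subextremal_bound {ε : ℝ} (hε : 0 < ε) (hε1 : ε ≤ 1) :
    1 ≤ -1 + 2 / ε * (1 + √(1 - ε)) := by
  have h2 : 2 ≤ 2 / ε := by rw [le_div_iff₀ hε]; linarith
  have : 2 / ε ≤ 2 / ε * (1 + √(1 - ε)) :=
    le_mul_of_one_le_right (by positivity) (le_add_of_nonneg_right (sqrt_nonneg _))
  linarith

lemma two_thirds_abs_lt_of_subextremal {m Q r : ℝ} (hm : 0 < m) (hQ : Q ≠ 0)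
    (hQm : Q ^ 2 ≤ m ^ 2) (hr : m + √(m ^ 2 - Q ^ 2) ≤ r) : 2 / 3 * |Q| < r := by
  have hQm' : |Q| ≤ m := abs_le_of_sq_le_sq hQm hm.le
  have hQpos : 0 < |Q| := abs_pos.2 hQ
  linarith [sqrt_nonneg (m ^ 2 - Q ^ 2)]

lemma two_thirds_abs_lt_of_superextremal {m Q r : ℝ} (hm : 0 < m)
    (hmQ : m ^ 2 < Q ^ 2) (hr : 2 * Q ^ 2 / (3 * m) < r) : 2 / 3 * |Q| < r := by
  have hmQ' : m < |Q| := by simpa [abs_of_pos hm] using sq_lt_sq.1 hmQ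
  have : 2 / 3 * |Q| < 2 * Q ^ 2 / (3 * m) := by
    rw [lt_div_iff₀ (by positivity), ← sq_abs Q]
    nlinarith [abs_nonneg Q]
  linarith

lemma sixteen_ninths_pi_sq_lt_area {Q r : ℝ} (hr : 2 / 3 * |Q| < r) :
    16 / 9 * π * Q ^ 2 < 4 * π * r ^ 2 := by
  have hsq : (2 / 3 * |Q|) ^ 2 < r ^ 2 := pow_lt_pow_left₀ hr (by positivity) two_ne_zero
  rw [mul_pow, sq_abs] at hsq
  nlinarith [pi_pos]

/-- Every stable isoperimetric sphere in Reissner–Nordström (`m > 0`, `Q ≠ 0`,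
with `r ≥ r₀` in the sub-extremal/extremal case and `r > r_c` in the
super-extremal case) has area `A = 4πr² > (16/9)πQ²`. Moreover for
`0 < ε ≤ 1` the sub-extremal bound satisfies `h ε > 4/9`. -/
theorem stmt_10 :
    (∀ ε : ℝ, 0 < ε → ε ≤ 1 → 4 / 9 < -1 + 2 / ε * (1 + Real.sqrt (1 - ε))) ∧
    (∀ m Q r : ℝ, 0 < m → Q ≠ 0 →
      ((Q ^ 2 ≤ m ^ 2 ∧ m + Real.sqrt (m ^ 2 - Q ^ 2) ≤ r) ∨
       (m ^ 2 < Q ^ 2 ∧ 2 * Q ^ 2 / (3 * m) < r)) →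
      16 / 9 * Real.pi * Q ^ 2 < 4 * Real.pi * r ^ 2) := by
  refine ⟨fun ε hε hε1 => by linarith [one_le_subextremal_bound hε hε1], ?_⟩
  rintro m Q r hm hQ (⟨hQm, hr⟩ | ⟨hmQ, hr⟩)
  · exact sixteen_ninths_pi_sq_lt_area (two_thirds_abs_lt_of_subextremal hm hQ hQm hr)
  · exact sixteen_ninths_pi_sq_lt_area (two_thirds_abs_lt_of_superextremal hm hmQ hr)
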